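/- arXiv:1901.04036 — 2 statements merged into one kernel-verified Lean document; each statement's English description precedes it below -/
import Mathlib

section
/- Let l, w be positive integers and i ∈ {1,2}, and let h(p) = h^{(i)}_{l,w}(p) be the reliability polynomial of the hammock network H^{(i)}_{l,w}, viewed as a real polynomial function. Then h(1) = 1 and the k-th derivative of h vanishes at 1 for every k = 1, 2, …, w−1. -/
open scoped Classical

/-- Parity predicate: kind 1 = even points (x+y even), kind 2 = odd points. -/
def HammockPar (i : ℕ) (p : ℤ × ℤ) : Prop :=
  if i = 1 then Even (p.1 + p.2) else Odd (p.1 + p.2)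

/-- The set 𝒱_{l,w} of lattice points of the rectangle [0,l] × [0,w]. -/
def HammockVAll (l w : ℕ) : Set (ℤ × ℤ) :=
  {p | 0 ≤ p.1 ∧ p.1 ≤ (l : ℤ) ∧ 0 ≤ p.2 ∧ p.2 ≤ (w : ℤ)}

/-- The vertex set V^{(i)}_{l,w} of the hammock network of kind `i`. -/
def HammockV (i l w : ℕ) : Set (ℤ × ℤ) :=
  {p | p ∈ HammockVAll l w ∧ HammockPar i p}

/-- The set 𝓔_{l,w} of all diagonal unit edges inside the rectangle. -/
def HammockEAll (l w : ℕ) : Set (Sym2 (ℤ × ℤ)) :=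
  {e | ∃ a b : ℤ × ℤ, e = s(a, b) ∧ a ∈ HammockVAll l w ∧ b ∈ HammockVAll l w ∧
      |a.1 - b.1| = 1 ∧ |a.2 - b.2| = 1}

/-- The edge set E^{(i)}_{l,w} of the hammock network of kind `i`. -/
def HammockE (i l w : ℕ) : Set (Sym2 (ℤ × ℤ)) :=
  {e | e ∈ HammockEAll l w ∧ ∀ p ∈ e, HammockPar i p}

/-- The allowed steps of an X-path. -/
def XStep : Set (ℤ × ℤ) := {(1, 1), (-1, 1), (1, -1), (-1, -1)}

/-- An X-path: a finite sequence of pairwise distinct lattice points, each obtained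
from the previous one by a step in `XStep`. -/
def IsXPath (vs : List (ℤ × ℤ)) : Prop :=
  vs.Nodup ∧ vs.Chain' (fun a b => b - a ∈ XStep)

/-- The list of edges of an X-path. -/
def xEdges (vs : List (ℤ × ℤ)) : List (Sym2 (ℤ × ℤ)) :=
  (vs.zip vs.tail).map fun q => s(q.1, q.2)

/-- A two-terminal network on the diagonal lattice: an edge set together with
a set of source nodes and a set of terminus nodes. -/
structure HNetwork where
  edges : Set (Sym2 (ℤ × ℤ))
  src : Set (ℤ × ℤ)
  tgt : Set (ℤ × ℤ)

/-- `P` is a pathset: `P ⊆ edges` and `P` contains all edges of some X-path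
joining a source node to a terminus node. -/
def HNetwork.IsPathset (N : HNetwork) (P : Set (Sym2 (ℤ × ℤ))) : Prop :=
  P ⊆ N.edges ∧ ∃ (vs : List (ℤ × ℤ)) (h : vs ≠ []),
    IsXPath vs ∧ vs.head h ∈ N.src ∧ vs.getLast h ∈ N.tgt ∧ ∀ e ∈ xEdges vs, e ∈ P

/-- `C` is a cutset: removing `C` leaves no pathset. -/
def HNetwork.IsCutset (N : HNetwork) (C : Set (Sym2 (ℤ × ℤ))) : Prop :=
  C ⊆ N.edges ∧ ¬ N.IsPathset (N.edges \ C)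

/-- A minpath: a pathset no proper subset of which is a pathset. -/
def HNetwork.IsMinpath (N : HNetwork) (P : Set (Sym2 (ℤ × ℤ))) : Prop :=
  N.IsPathset P ∧ ∀ Q, Q ⊂ P → ¬ N.IsPathset Q

/-- A mincut: a cutset no proper subset of which is a cutset. -/
def HNetwork.IsMincut (N : HNetwork) (C : Set (Sym2 (ℤ × ℤ))) : Prop :=
  N.IsCutset C ∧ ∀ D, D ⊂ C → ¬ N.IsCutset D

/-- The hammock network H^{(i)}_{l,w}: sources are its vertices with x = 0,
terminals its vertices with x = l. -/
def hammock (i l w : ℕ) : HNetwork where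
  edges := HammockE i l w
  src := {p | p ∈ HammockV i l w ∧ p.1 = 0}
  tgt := {p | p ∈ HammockV i l w ∧ p.1 = (l : ℤ)}

/-- The dual network H̄^{(i)}_{l,w}: vertex set 𝒱 − V^{(i)}, edge set 𝓔 − E^{(i)},
sources the points with y = 0, terminals the points with y = w. -/
def hammockDual (i l w : ℕ) : HNetwork where
  edges := HammockEAll l w \ HammockE i l w
  src := {p | p ∈ HammockVAll l w \ HammockV i l w ∧ p.2 = 0}
  tgt := {p | p ∈ HammockVAll l w \ HammockV i l w ∧ p.2 = (w : ℤ)}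

/-- The complementary edge: ē of e = {(x,y),(x+1,y±1)} is {(x+1,y),(x,y±1)}. -/
def complEdge : Sym2 (ℤ × ℤ) → Sym2 (ℤ × ℤ) :=
  Sym2.lift ⟨fun a b => s((a.1, b.2), (b.1, a.2)), fun _ _ => Sym2.eq_swap⟩

/-- The other kind: 2/1 = 2 and 2/2 = 1. -/
def otherKind (i : ℕ) : ℕ := if i = 1 then 2 else 1

/-- The edge set E^{(i)}_{l,w} as a finite set. -/
noncomputable def hammockEFinset (i l w : ℕ) : Finset (Sym2 (ℤ × ℤ)) :=
  ((Finset.Icc (0 : ℤ) l) ×ˢ (Finset.Icc (0 : ℤ) w)).sym2.filter (· ∈ HammockE i l w)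

/-- The reliability polynomial h^{(i)}_{l,w}(p) = Σ_P p^{|P|} (1-p)^{lw-|P|},
summing over all pathsets P of H^{(i)}_{l,w}. -/
noncomputable def hammockRel (i l w : ℕ) (p : ℝ) : ℝ :=
  ∑ P ∈ (hammockEFinset i l w).powerset.filter (fun P : Finset (Sym2 (ℤ × ℤ)) => (hammock i l w).IsPathset ↑P),
    p ^ P.card * (1 - p) ^ (l * w - P.card)

/-!
Cut the rectangle into the `w` horizontal strips `s ≤ y ≤ s + 1`. Between the columns `x` and
`x + 1` each strip contains exactly one edge of kind `i`, so `|E^{(i)}_{l,w}| = lw`, and the edges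
of one strip form a zig-zag X-path from a source to a terminus. A set of edges that is not a
pathset therefore misses an edge in every strip, hence has at most `lw - w` elements. As the terms
`p^|P| (1-p)^{lw-|P|}` summed over all `P ⊆ E` give `1`, `1 - h(p)` is the same sum over the
non-pathsets, and every one of its terms is divisible by `(1 - p)^w`; so `h - 1` has a root of
multiplicity at least `w` at `p = 1`.
-/

open Polynomial

theorem Finset.one_sub_pow_dvd_one_sub_sum_filter {ι R : Type*} [CommRing R] (a : R)
    (E : Finset ι) (S : Finset ι → Prop) [DecidablePred S] (n : ℕ)
    (hS : ∀ P ⊆ E, ¬ S P → P.card + n ≤ E.card) :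
    (1 - a) ^ n ∣ 1 - ∑ P ∈ E.powerset.filter S, a ^ P.card * (1 - a) ^ (E.card - P.card) := by
  have htotal : ∑ P ∈ E.powerset, a ^ P.card * (1 - a) ^ (E.card - P.card) = 1 := by
    rw [Finset.sum_pow_mul_eq_add_pow, add_sub_cancel, one_pow]
  rw [← Finset.sum_filter_add_sum_filter_not E.powerset S] at htotal
  rw [← eq_sub_of_add_eq' htotal]
  refine Finset.dvd_sum fun P hP => ?_
  rw [Finset.mem_filter, Finset.mem_powerset] at hP
  exact (pow_dvd_pow _ (by have := hS P hP.1 hP.2; omega)).mul_left _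

theorem Polynomial.iteratedDeriv_eval {𝕜 : Type*} [NontriviallyNormedField 𝕜] (p : 𝕜[X])
    (k : ℕ) : iteratedDeriv k (fun x => p.eval x) = fun x => (derivative^[k] p).eval x := by
  induction k generalizing p with
  | zero => rfl
  | succ k ih =>
    have hderiv : deriv (fun x => p.eval x) = fun x => (derivative p).eval x := by
      ext x
      exact p.deriv
    rw [iteratedDeriv_succ', Function.iterate_succ_apply, hderiv, ih]

theorem Polynomial.eval_iterate_derivative_eq_zero_of_pow_dvd {R : Type*} [CommRing R]
    {p : R[X]} {a : R} {n k : ℕ} (h : (X - C a) ^ n ∣ p) (hk : k < n) :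
    (derivative^[k] p).eval a = 0 :=
  dvd_iff_isRoot.mp <| (dvd_pow_self _ (Nat.sub_ne_zero_of_lt hk)).trans
    (pow_sub_dvd_iterate_derivative_of_pow_dvd k h)

theorem List.exists_getElem_of_mem_zip_tail {α : Type*} {l : List α} {q : α × α}
    (h : q ∈ l.zip l.tail) :
    ∃ (j : ℕ) (hj : j + 1 < l.length), q = (l[j], l[j + 1]) := by
  obtain ⟨j, hj, rfl⟩ := List.mem_iff_getElem.1 h
  simp only [List.length_zip, List.length_tail] at hj
  exact ⟨j, by omega, by simp⟩

section Strip

variable (i : ℕ)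

theorem hammockPar_add_one_fst (x y : ℤ) : HammockPar i (x + 1, y) ↔ ¬ HammockPar i (x, y) := by
  unfold HammockPar
  simp only [Int.even_iff, Int.odd_iff]
  split <;> omega

theorem hammockPar_add_one_snd (x y : ℤ) : HammockPar i (x, y + 1) ↔ ¬ HammockPar i (x, y) := by
  unfold HammockPar
  simp only [Int.even_iff, Int.odd_iff]
  split <;> omega

noncomputable def stripY (s x : ℤ) : ℤ := if HammockPar i (x, s) then s else s + 1

theorem hammockPar_stripY (s x : ℤ) : HammockPar i (x, stripY i s x) := by
  unfold stripY
  split_ifs with h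
  · exact h
  · exact (hammockPar_add_one_snd i x s).2 h

theorem stripY_cases (s x : ℤ) :
    stripY i s x = s ∧ stripY i s (x + 1) = s + 1 ∨
      stripY i s x = s + 1 ∧ stripY i s (x + 1) = s := by
  by_cases h : HammockPar i (x, s) <;> simp [stripY, h, hammockPar_add_one_fst]

theorem stripY_bounds (s x : ℤ) : s ≤ stripY i s x ∧ stripY i s x ≤ s + 1 := by
  unfold stripY; split_ifs <;> omega

theorem stripY_eq_of_hammockPar {s x y : ℤ} (hy : y = s ∨ y = s + 1) (hp : HammockPar i (x, y)) :
    stripY i s x = y := by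
  rcases hy with rfl | rfl
  · simp [stripY, hp]
  · simp [stripY, (hammockPar_add_one_snd i x s).1 hp]

noncomputable def stripEdge (s x : ℤ) : Sym2 (ℤ × ℤ) :=
  s((x, stripY i s x), (x + 1, stripY i s (x + 1)))

noncomputable def stripPath (s : ℤ) (n : ℕ) : List (ℤ × ℤ) :=
  (List.range (n + 1)).map fun x : ℕ => ((x : ℤ), stripY i s x)

theorem isXPath_stripPath (s : ℤ) (n : ℕ) : IsXPath (stripPath i s n) := by
  refine ⟨List.Nodup.map (fun x y h => by simpa using congrArg Prod.fst h) List.nodup_range, ?_⟩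
  refine (List.isChain_map _).2 <| (List.isChain_range_succ _ _).2 ?_
  intro m _
  rcases stripY_cases i s m with ⟨h₀, h₁⟩ | ⟨h₀, h₁⟩ <;>
    simp [XStep, h₀, h₁]

theorem mem_xEdges_stripPath (s : ℤ) (n : ℕ) {e : Sym2 (ℤ × ℤ)}
    (he : e ∈ xEdges (stripPath i s n)) :
    ∃ x : ℕ, x < n ∧ e = stripEdge i s x := by
  obtain ⟨q, hq, rfl⟩ := List.mem_map.1 he
  obtain ⟨j, hj, rfl⟩ := List.exists_getElem_of_mem_zip_tail hq
  simp only [stripPath, List.length_map, List.length_range, Order.lt_add_one_iff,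
    List.getElem_map, List.getElem_range, Nat.cast_add, Nat.cast_one] at hj ⊢
  exact ⟨j, hj, by simp [stripEdge]⟩

variable {l w : ℕ}

theorem hammock_isPathset_of_stripEdge_mem {P : Set (Sym2 (ℤ × ℤ))} (hPE : P ⊆ HammockE i l w)
    {s : ℤ} (hs₀ : 0 ≤ s) (hsw : s + 1 ≤ w) (hP : ∀ x : ℤ, 0 ≤ x → x < l → stripEdge i s x ∈ P) :
    (hammock i l w).IsPathset P := by
  have hne : stripPath i s l ≠ [] := by simp [stripPath]
  have hV : ∀ x : ℤ, 0 ≤ x → x ≤ l → (x, stripY i s x) ∈ HammockV i l w := fun x hx₀ hxl =>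
    ⟨⟨hx₀, hxl, by linarith [stripY_bounds i s x], by linarith [stripY_bounds i s x]⟩,
      hammockPar_stripY i s x⟩
  refine ⟨hPE, stripPath i s l, hne, isXPath_stripPath i s l, ?_, ?_, fun e he => ?_⟩
  · simp only [stripPath, List.head_map, List.head_range]
    exact ⟨hV 0 le_rfl (by positivity), rfl⟩
  · simp only [stripPath, List.getLast_map, List.getLast_range]
    exact ⟨hV l (by positivity) le_rfl, by simp⟩
  · obtain ⟨x, hx, rfl⟩ := mem_xEdges_stripPath i s l he
    exact hP x (by positivity) (by exact_mod_cast hx)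

theorem stripEdge_mem_hammockE {s x : ℤ} (hs₀ : 0 ≤ s) (hsw : s + 1 ≤ w) (hx₀ : 0 ≤ x)
    (hxl : x < l) : stripEdge i s x ∈ HammockE i l w := by
  have h₀ := stripY_bounds i s x
  have h₁ := stripY_bounds i s (x + 1)
  refine ⟨⟨_, _, rfl, ⟨hx₀, by omega, by omega, by omega⟩, ⟨by omega, hxl, by omega, by omega⟩,
    by simp, ?_⟩, ?_⟩
  · rcases stripY_cases i s x with ⟨ha, hb⟩ | ⟨ha, hb⟩ <;> simp [ha, hb]
  · intro p hp
    rcases Sym2.mem_iff.1 hp with rfl | rfl <;> exact hammockPar_stripY ..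

theorem eq_stripEdge_of_fst_eq_add_one {a b : ℤ × ℤ} (ha : a ∈ HammockVAll l w)
    (hb : b ∈ HammockVAll l w) (h₁ : b.1 = a.1 + 1) (h₂ : |a.2 - b.2| = 1)
    (hpa : HammockPar i a) (hpb : HammockPar i b) :
    ∃ x s : ℤ, 0 ≤ x ∧ x < l ∧ 0 ≤ s ∧ s + 1 ≤ w ∧ s(a, b) = stripEdge i s x := by
  obtain ⟨x, y⟩ := a
  obtain ⟨x', y'⟩ := b
  obtain ⟨hx₀, -, hy₀, hyw⟩ := ha
  obtain ⟨-, hx'l, hy'₀, hy'w⟩ := hb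
  dsimp only at *
  subst h₁
  have h₂' := abs_eq (zero_le_one' ℤ) |>.1 h₂
  refine ⟨x, min y y', hx₀, by omega, by omega, by omega, ?_⟩
  rw [stripEdge, stripY_eq_of_hammockPar i (by omega) hpa,
    stripY_eq_of_hammockPar i (by omega) hpb]

theorem exists_eq_stripEdge {e : Sym2 (ℤ × ℤ)} (he : e ∈ HammockE i l w) :
    ∃ x s : ℤ, 0 ≤ x ∧ x < l ∧ 0 ≤ s ∧ s + 1 ≤ w ∧ e = stripEdge i s x := by
  obtain ⟨⟨a, b, rfl, ha, hb, h₁, h₂⟩, hpar⟩ := he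
  have hpa := hpar a (Sym2.mem_mk_left a b)
  have hpb := hpar b (Sym2.mem_mk_right a b)
  rcases abs_eq (zero_le_one' ℤ) |>.1 h₁ with h | h
  · rw [Sym2.eq_swap]
    exact eq_stripEdge_of_fst_eq_add_one i hb ha (by omega) (by rwa [abs_sub_comm]) hpb hpa
  · exact eq_stripEdge_of_fst_eq_add_one i ha hb (by omega) h₂ hpa hpb

theorem stripEdge_inj {s x s' x' : ℤ} (h : stripEdge i s x = stripEdge i s' x') :
    s = s' ∧ x = x' := by
  rw [stripEdge, stripEdge, Sym2.eq_iff] at h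
  rcases h with ⟨h₁, h₂⟩ | ⟨h₁, h₂⟩
  · obtain rfl : x = x' := congrArg Prod.fst h₁
    have hu := congrArg Prod.snd h₁
    have hv := congrArg Prod.snd h₂
    dsimp only at hu hv
    rcases stripY_cases i s x with ⟨c₁, c₂⟩ | ⟨c₁, c₂⟩ <;>
      rcases stripY_cases i s' x with ⟨d₁, d₂⟩ | ⟨d₁, d₂⟩ <;> omega
  · have e₁ := congrArg Prod.fst h₁
    have e₂ := congrArg Prod.fst h₂
    dsimp only at e₁ e₂
    omega

theorem mem_hammockEFinset {e : Sym2 (ℤ × ℤ)} :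
    e ∈ hammockEFinset i l w ↔ e ∈ HammockE i l w := by
  refine ⟨fun h => (Finset.mem_filter.1 h).2, fun h => Finset.mem_filter.2 ⟨?_, h⟩⟩
  obtain ⟨a, b, rfl, ha, hb, -⟩ := h.1
  simp_all [HammockVAll]

theorem card_hammockEFinset : (hammockEFinset i l w).card = l * w := by
  rw [show l * w = (Finset.range l ×ˢ Finset.range w).card by simp]
  symm
  refine Finset.card_bij (fun q _ => stripEdge i q.2 q.1) ?_ ?_ ?_
  · rintro ⟨x, s⟩ hq
    rw [Finset.mem_product, Finset.mem_range, Finset.mem_range] at hq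
    exact (mem_hammockEFinset i).2
      (stripEdge_mem_hammockE i (by positivity) (by exact_mod_cast hq.2) (by positivity)
        (by exact_mod_cast hq.1))
  · rintro ⟨x, s⟩ - ⟨x', s'⟩ - h
    obtain ⟨hs, hx⟩ := stripEdge_inj i h
    simp_all
  · intro e he
    obtain ⟨x, s, hx₀, hxl, hs₀, hsw, rfl⟩ := exists_eq_stripEdge i ((mem_hammockEFinset i).1 he)
    refine ⟨(x.toNat, s.toNat), ?_, ?_⟩
    · simp only [Finset.mem_product, Finset.mem_range]
      omega
    · simp [Int.toNat_of_nonneg hs₀, Int.toNat_of_nonneg hx₀]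

theorem card_add_le_of_not_isPathset {P : Finset (Sym2 (ℤ × ℤ))} (hP : P ⊆ hammockEFinset i l w)
    (hnP : ¬ (hammock i l w).IsPathset P) : P.card + w ≤ l * w := by
  have hPE : (P : Set (Sym2 (ℤ × ℤ))) ⊆ HammockE i l w := fun e he =>
    (mem_hammockEFinset i).1 (hP he)
  have hmiss : ∀ s < w, ∃ x : ℤ, 0 ≤ x ∧ x < l ∧ stripEdge i s x ∉ P := by
    intro s hs
    by_contra! h
    exact hnP (hammock_isPathset_of_stripEdge_mem i hPE (Nat.cast_nonneg s)
      (by exact_mod_cast hs) h)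
  choose! x hx₀ hxl hxP using hmiss
  have hmaps : ∀ s ∈ Finset.range w, stripEdge i s (x s) ∈ hammockEFinset i l w \ P := by
    intro s hs
    rw [Finset.mem_range] at hs
    exact Finset.mem_sdiff.2 ⟨(mem_hammockEFinset i).2 (stripEdge_mem_hammockE i
      (Nat.cast_nonneg s) (by exact_mod_cast hs) (hx₀ s hs) (hxl s hs)), hxP s hs⟩
  have hinj : Set.InjOn (fun s : ℕ => stripEdge i s (x s)) (Finset.range w) := fun s _ s' _ h =>
    by exact_mod_cast (stripEdge_inj i h).1
  have hstrips := Finset.card_le_card_of_injOn _ hmaps hinj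
  rw [Finset.card_range, Finset.card_sdiff_of_subset hP, card_hammockEFinset] at hstrips
  have hPcard := (Finset.card_le_card hP).trans_eq (card_hammockEFinset i)
  omega

end Strip

noncomputable def hammockPoly (i l w : ℕ) : ℝ[X] :=
  ∑ P ∈ (hammockEFinset i l w).powerset.filter
      (fun P : Finset (Sym2 (ℤ × ℤ)) => (hammock i l w).IsPathset ↑P),
    X ^ P.card * (1 - X) ^ (l * w - P.card)

theorem hammockRel_eq_eval (i l w : ℕ) :
    hammockRel i l w = fun p => (hammockPoly i l w).eval p := by
  funext p
  simp [hammockRel, hammockPoly, eval_finsetSum]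

theorem X_sub_one_pow_dvd_one_sub_hammockPoly (i l w : ℕ) :
    (X - C 1) ^ w ∣ 1 - hammockPoly i l w := by
  have hroot : X - C 1 ∣ (1 - X : ℝ[X]) := ⟨-1, by rw [C_1]; ring⟩
  refine (pow_dvd_pow_of_dvd hroot w).trans ?_
  rw [hammockPoly, ← card_hammockEFinset i]
  exact Finset.one_sub_pow_dvd_one_sub_sum_filter X _ _ w fun P hP hnP => by
    rw [card_hammockEFinset]; exact card_add_le_of_not_isPathset i hP hnP

theorem hammockRel_iteratedDeriv_one_general (l w : ℕ) (hw : 0 < w)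
    (i : ℕ) :
    hammockRel i l w 1 = 1 ∧
      ∀ k : ℕ, 1 ≤ k → k < w → iteratedDeriv k (hammockRel i l w) 1 = 0 := by
  have hdvd := X_sub_one_pow_dvd_one_sub_hammockPoly i l w
  rw [hammockRel_eq_eval]
  refine ⟨?_, fun k hk hkw => ?_⟩
  · have h := eval_iterate_derivative_eq_zero_of_pow_dvd hdvd hw
    rw [Function.iterate_zero_apply, eval_sub, eval_one, sub_eq_zero] at h
    exact h.symm
  · rw [iteratedDeriv_eval]
    have h := eval_iterate_derivative_eq_zero_of_pow_dvd hdvd hkw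
    rwa [iterate_derivative_sub, iterate_derivative_one hk, zero_sub, eval_neg, neg_eq_zero] at h

/-- h(1) = 1, and the k-th derivative of h = h^{(i)}_{l,w} vanishes at 1
for every k = 1, 2, …, w−1. -/
theorem hammockRel_iteratedDeriv_one (l w : ℕ) (hl : 0 < l) (hw : 0 < w)
    (i : ℕ) (hi : i = 1 ∨ i = 2) :
    hammockRel i l w 1 = 1 ∧
      ∀ k : ℕ, 1 ≤ k → k < w → iteratedDeriv k (hammockRel i l w) 1 = 0 :=
  hammockRel_iteratedDeriv_one_general l w hw i
end

section
/- Let l, w be positive integers and i ∈ {1,2}. Every cutset of the hammock network H^{(i)}_{l,w} contains at least w edges. -/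
/-!
Each strip `k ≤ y ≤ k + 1` with `0 ≤ k < w` carries a zigzag X-path from `x = 0` to `x = l`
through the vertices of the required parity. These `w` paths are pairwise edge-disjoint, and a
cutset meets every source–terminus path, so it contains `w` distinct edges.
-/

open scoped Classical

lemma xEdges_map_range (f : ℕ → ℤ × ℤ) (n : ℕ) :
    xEdges ((List.range (n + 1)).map f) = (List.range n).map fun j => s(f j, f (j + 1)) := by
  apply List.ext_getElem
  · simp [xEdges]
  · intro j _ _
    simp [xEdges, List.getElem_zip, List.getElem_tail]

namespace HNetwork

def IsSTPath (N : HNetwork) (vs : List (ℤ × ℤ)) : Prop :=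
  ∃ h : vs ≠ [], IsXPath vs ∧ vs.head h ∈ N.src ∧ vs.getLast h ∈ N.tgt ∧
    ∀ e ∈ xEdges vs, e ∈ N.edges

variable {N : HNetwork} {C : Set (Sym2 (ℤ × ℤ))}

lemma IsCutset.exists_mem_xEdges (hC : N.IsCutset C) {vs : List (ℤ × ℤ)}
    (hvs : N.IsSTPath vs) : ∃ e ∈ xEdges vs, e ∈ C := by
  obtain ⟨hne, hX, hsrc, htgt, hE⟩ := hvs
  by_contra! h
  exact hC.2 ⟨Set.sdiff_subset, vs, hne, hX, hsrc, htgt, fun e he => ⟨hE e he, h e he⟩⟩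

lemma IsCutset.card_le_ncard (hC : N.IsCutset C) (hCfin : C.Finite) {ι : Type*} [Fintype ι]
    (path : ι → List (ℤ × ℤ)) (hpath : ∀ k, N.IsSTPath (path k))
    (hdisj : Pairwise fun k k' => (xEdges (path k)).Disjoint (xEdges (path k'))) :
    Fintype.card ι ≤ C.ncard := by
  choose e he heC using fun k => hC.exists_mem_xEdges (hpath k)
  have hinj : Function.Injective e := fun k k' hkk' => by
    by_contra hne
    exact hdisj hne (he k) (hkk' ▸ he k')
  calc Fintype.card ι = (Set.range e).ncard := by
        rw [Set.ncard_range_of_injective hinj, Nat.card_eq_fintype_card]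
    _ ≤ C.ncard := Set.ncard_le_ncard (Set.range_subset_iff.2 heC) hCfin

end HNetwork

lemma hammockVAll_finite (l w : ℕ) : (HammockVAll l w).Finite := by
  refine ((Set.finite_Icc 0 (l : ℤ)).prod (Set.finite_Icc 0 (w : ℤ))).subset ?_
  exact fun p ⟨h₀, h₁, h₂, h₃⟩ => ⟨⟨h₀, h₁⟩, h₂, h₃⟩

lemma hammockEAll_finite (l w : ℕ) : (HammockEAll l w).Finite := by
  have hV := hammockVAll_finite l w
  refine ((hV.prod hV).image fun p => s(p.1, p.2)).subset ?_
  rintro e ⟨a, b, rfl, ha, hb, -, -⟩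
  exact ⟨(a, b), ⟨ha, hb⟩, rfl⟩

lemma abs_sub_eq_one_of_sub_mem_xStep {a b : ℤ × ℤ} (h : b - a ∈ XStep) :
    |a.1 - b.1| = 1 ∧ |a.2 - b.2| = 1 := by
  have h₁ : a.1 - b.1 = -(b - a).1 := by simp
  have h₂ : a.2 - b.2 = -(b - a).2 := by simp
  simp only [XStep, Set.mem_insert_iff, Set.mem_singleton_iff] at h
  rw [h₁, h₂]
  rcases h with h | h | h | h <;> simp [h]

def kindParity (i : ℕ) : ℤ := if i = 1 then 0 else 1

lemma hammockPar_iff (i : ℕ) (p : ℤ × ℤ) : HammockPar i p ↔ (p.1 + p.2) % 2 = kindParity i := by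
  by_cases hi : i = 1 <;> simp [HammockPar, kindParity, hi, Int.even_iff, Int.odd_iff]

/-- The zigzag through the strip `k ≤ y ≤ k + 1` visiting the vertices of kind `i`. -/
def zigzag (i k j : ℕ) : ℤ × ℤ := (j, k + (j + k + kindParity i) % 2)

def zigzagPath (i k l : ℕ) : List (ℤ × ℤ) := (List.range (l + 1)).map (zigzag i k)

section Zigzag

variable {i k j l w : ℕ}

lemma kindParity_eq_zero_or_one (i : ℕ) : kindParity i = 0 ∨ kindParity i = 1 := by
  unfold kindParity; split_ifs <;> simp

lemma zigzag_mem_hammockV (hk : k < w) (hj : j ≤ l) : zigzag i k j ∈ HammockV i l w := by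
  have := kindParity_eq_zero_or_one i
  refine ⟨⟨?_, ?_, ?_, ?_⟩, (hammockPar_iff i _).2 ?_⟩ <;> simp only [zigzag] <;> omega

lemma zigzag_succ_sub_mem_xStep (i k j : ℕ) : zigzag i k (j + 1) - zigzag i k j ∈ XStep := by
  have h : ((j : ℤ) + 1 + k + kindParity i) % 2 - (j + k + kindParity i) % 2 = 1 ∨
      ((j : ℤ) + 1 + k + kindParity i) % 2 - (j + k + kindParity i) % 2 = -1 := by omega
  rcases h with h | h <;> simp [zigzag, XStep, h]

lemma zigzag_edge_mem_hammockE (hk : k < w) (hj : j < l) :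
    s(zigzag i k j, zigzag i k (j + 1)) ∈ HammockE i l w := by
  refine ⟨⟨_, _, rfl, (zigzag_mem_hammockV hk hj.le).1, (zigzag_mem_hammockV hk hj).1,
    abs_sub_eq_one_of_sub_mem_xStep (zigzag_succ_sub_mem_xStep i k j)⟩, ?_⟩
  rintro p hp
  rcases Sym2.mem_iff.1 hp with rfl | rfl
  · exact (zigzag_mem_hammockV hk hj.le).2
  · exact (zigzag_mem_hammockV hk hj).2

lemma isXPath_zigzagPath (i k l : ℕ) : IsXPath (zigzagPath i k l) := by
  refine ⟨List.Nodup.map (fun a b hab => by simpa [zigzag] using congrArg Prod.fst hab)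
    List.nodup_range, ?_⟩
  rw [zigzagPath, List.Chain', List.isChain_map, List.isChain_range_succ]
  exact fun j _ => zigzag_succ_sub_mem_xStep i k j

lemma xEdges_zigzagPath (i k l : ℕ) :
    xEdges (zigzagPath i k l) = (List.range l).map fun j => s(zigzag i k j, zigzag i k (j + 1)) :=
  xEdges_map_range _ l

lemma zigzagPath_isSTPath (hk : k < w) : (hammock i l w).IsSTPath (zigzagPath i k l) := by
  have hne : zigzagPath i k l ≠ [] := by simp [zigzagPath]
  refine ⟨hne, isXPath_zigzagPath i k l, ?_, ?_, ?_⟩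
  · rw [List.head_eq_getElem]
    simpa [zigzagPath] using ⟨zigzag_mem_hammockV (l := l) hk (Nat.zero_le _), rfl⟩
  · rw [List.getLast_eq_getElem]
    simpa [zigzagPath] using ⟨zigzag_mem_hammockV (l := l) hk le_rfl, rfl⟩
  · rw [xEdges_zigzagPath]
    simp only [List.mem_map, List.mem_range]
    rintro _ ⟨j, hj, rfl⟩
    exact zigzag_edge_mem_hammockE hk hj

/-- An edge of the zigzag in the strip `k ≤ y ≤ k + 1` joins `y = k` to `y = k + 1`,
so it determines `k`. -/
lemma eq_of_zigzag_edge_eq {k' j' : ℕ}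
    (h : s(zigzag i k j, zigzag i k (j + 1)) = s(zigzag i k' j', zigzag i k' (j' + 1))) :
    k = k' := by
  rcases Sym2.eq_iff.1 h with ⟨h₁, h₂⟩ | ⟨h₁, h₂⟩ <;>
    simp only [zigzag, Prod.mk.injEq] at h₁ h₂ <;> omega

lemma disjoint_xEdges_zigzagPath {k' : ℕ} (hk : k ≠ k') :
    (xEdges (zigzagPath i k l)).Disjoint (xEdges (zigzagPath i k' l)) := by
  intro e he he'
  rw [xEdges_zigzagPath, List.mem_map] at he he'
  obtain ⟨j, -, rfl⟩ := he
  obtain ⟨j', -, h⟩ := he'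
  exact hk (eq_of_zigzag_edge_eq h.symm)

end Zigzag

theorem cutset_card_ge_general (l w : ℕ)
    (i : ℕ) (C : Set (Sym2 (ℤ × ℤ)))
    (hC : (hammock i l w).IsCutset C) :
    w ≤ C.ncard := by
  have hCfin : C.Finite := (hammockEAll_finite l w).subset fun e he => (hC.1 he).1
  simpa using hC.card_le_ncard hCfin (fun k : Fin w => zigzagPath i k l)
    (fun k => zigzagPath_isSTPath k.2)
    (fun k k' hkk' => disjoint_xEdges_zigzagPath (Fin.val_injective.ne hkk'))

/-- Every cutset of the hammock network H^{(i)}_{l,w} contains at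
least w edges. -/
theorem cutset_card_ge (l w : ℕ) (hl : 0 < l) (hw : 0 < w)
    (i : ℕ) (hi : i = 1 ∨ i = 2) (C : Set (Sym2 (ℤ × ℤ)))
    (hC : (hammock i l w).IsCutset C) :
    w ≤ C.ncard :=
  cutset_card_ge_general l w i C hC
end
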